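/- arXiv:1211.6505 — 3 statements merged into one kernel-verified Lean document; each statement's English description precedes it below -/
import Mathlib

section
/- Let n ≥ 1, let Φ be a Schwartz function on ℝⁿ, let T > 0 and set q = n/T. Then there is a constant C = C(n) such that for every tempered distribution f on ℝⁿ and every x ∈ ℝⁿ, M_{Φ,T}f(x)^q ≤ C · M((M_{Φ,1}f)^q)(x), where both sides are interpreted as values in [0,∞]. -/
open MeasureTheory Metric Filter Topology ENNReal SchwartzMap
open scoped NNReal

noncomputable section

namespace VarHardy

variable {n : ℕ}

/-- `n`-dimensional Euclidean space. -/
abbrev Euc (n : ℕ) := EuclideanSpace ℝ (Fin n)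

/-- The closed axis-parallel cube centered at `c` with half side length `r`. -/
def cube (c : Euc n) (r : ℝ) : Set (Euc n) := {y | ∀ i, |y i - c i| ≤ r}

/-- The Hardy–Littlewood maximal operator of an `ℝ≥0∞`-valued function: the supremum of
the averages over all axis-parallel cubes containing the point. -/
def maximalFn (f : Euc n → ℝ≥0∞) (x : Euc n) : ℝ≥0∞ :=
  ⨆ (c : Euc n) (r : ℝ) (_ : 0 < r) (_ : x ∈ cube c r),
    (volume (cube c r))⁻¹ * ∫⁻ y in cube c r, f y

/-- The Hardy–Littlewood maximal operator of a real-valued function. -/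
def maximalOp (f : Euc n → ℝ) (x : Euc n) : ℝ≥0∞ :=
  maximalFn (fun y => (‖f y‖₊ : ℝ≥0∞)) x

/-- The Luxemburg quasi-norm `‖f‖_{p(·)}` of an `ℝ≥0∞`-valued function `f`. -/
def luxNorm (p : Euc n → ℝ) (f : Euc n → ℝ≥0∞) : ℝ≥0∞ :=
  sInf {l : ℝ≥0∞ | ∫⁻ x, (f x / l) ^ p x ∂volume ≤ 1}

/-- The Luxemburg quasi-norm of a real-valued function. -/
def luxNorm' (p : Euc n → ℝ) (f : Euc n → ℝ) : ℝ≥0∞ :=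
  luxNorm p (fun x => (‖f x‖₊ : ℝ≥0∞))

/-- `p(·) ∈ M𝒫₀` with exponent `p₀`:  `0 < p₀ < p₋`, `p₊ < ∞`, and the Hardy–Littlewood
maximal operator is bounded on `L^{p(·)/p₀}`. -/
structure IsMP0 (p : Euc n → ℝ) (p₀ : ℝ) : Prop where
  meas : Measurable p
  p₀_pos : 0 < p₀
  p₀_lt_essInf : ∃ m : ℝ, p₀ < m ∧ ∀ᵐ x ∂(volume : Measure (Euc n)), m ≤ p x
  essSup_lt_top : ∃ M : ℝ, ∀ᵐ x ∂(volume : Measure (Euc n)), p x ≤ M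
  maximal_bound : ∃ C : ℝ≥0∞, C < ∞ ∧ ∀ f : Euc n → ℝ≥0∞, Measurable f →
    luxNorm (fun x => p x / p₀) (maximalFn f) ≤ C * luxNorm (fun x => p x / p₀) f

section Schwartz

lemma hasTemperateGrowth_affine (A : Euc n →L[ℝ] Euc n) (b : Euc n) :
    Function.HasTemperateGrowth (fun y : Euc n => A y + b) := by
  apply Function.HasTemperateGrowth.of_fderiv (k := 1) (C := ‖A‖ + ‖b‖)
  · have h : (fderiv ℝ fun y : Euc n => A y + b) = fun _ => A := by
      funext y
      rw [fderiv_add_const]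
      exact A.fderiv
    rw [h]
    exact .const _
  · exact A.differentiable.add_const _
  · intro z
    have h1 : ‖A z + b‖ ≤ ‖A‖ * ‖z‖ + ‖b‖ :=
      (norm_add_le _ _).trans (by gcongr; exact A.le_opNorm z)
    have h2 : ‖A‖ * ‖z‖ + ‖b‖ ≤ (‖A‖ + ‖b‖) * (1 + ‖z‖) ^ 1 := by
      have hz := norm_nonneg z
      have hA := A.opNorm_nonneg
      have hb := norm_nonneg b
      nlinarith
    exact h1.trans h2

lemma hasTemperateGrowth_dilateShift (t : ℝ) (x : Euc n) :
    Function.HasTemperateGrowth (fun y : Euc n => t⁻¹ • (x - y)) := by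
  have h : (fun y : Euc n => t⁻¹ • (x - y)) =
      fun y : Euc n => (-(t⁻¹ • ContinuousLinearMap.id ℝ (Euc n))) y + t⁻¹ • x := by
    funext y
    simp [ContinuousLinearMap.neg_apply, ContinuousLinearMap.smul_apply,
      ContinuousLinearMap.id_apply, smul_sub, sub_eq_neg_add]
  rw [h]
  exact hasTemperateGrowth_affine _ _

lemma antilipschitz_dilateShift (t : ℝ) (ht : 0 < t) (x : Euc n) :
    AntilipschitzWith (⟨t, ht.le⟩ : ℝ≥0) (fun y : Euc n => t⁻¹ • (x - y)) := by
  apply AntilipschitzWith.of_le_mul_dist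
  intro y z
  have h : dist (t⁻¹ • (x - y)) (t⁻¹ • (x - z)) = t⁻¹ * dist y z := by
    rw [dist_smul₀, Real.norm_eq_abs, dist_sub_left, abs_of_pos (inv_pos.2 ht)]
  rw [h]
  change dist y z ≤ t * (t⁻¹ * dist y z)
  rw [← mul_assoc, mul_inv_cancel₀ ht.ne', one_mul]

/-- The Schwartz function `y ↦ t^{-n} Φ((x - y)/t) = Φ_t(x - y)`. -/
def dilateShift (Φ : 𝓢(Euc n, ℝ)) (t : ℝ) (ht : 0 < t) (x : Euc n) : 𝓢(Euc n, ℝ) :=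
  (t ^ n)⁻¹ • SchwartzMap.compCLMOfAntilipschitz ℝ (hasTemperateGrowth_dilateShift t x)
    (antilipschitz_dilateShift t ht x) Φ

@[simp] lemma dilateShift_apply (Φ : 𝓢(Euc n, ℝ)) (t : ℝ) (ht : 0 < t) (x y : Euc n) :
    dilateShift Φ t ht x y = (t ^ n)⁻¹ * Φ (t⁻¹ • (x - y)) := rfl

/-- Tempered distributions on `ℝⁿ`. -/
abbrev Distribution (n : ℕ) := 𝓢(Euc n, ℝ) →L[ℝ] ℝ

/-- The convolution `(f ∗ Φ_t)(x)` of a tempered distribution `f` with `Φ_t`. -/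
def distConv (f : Distribution n) (Φ : 𝓢(Euc n, ℝ)) (t : ℝ) (ht : 0 < t) (x : Euc n) : ℝ :=
  f (dilateShift Φ t ht x)

/-- The radial maximal function `M_{Φ,0} f`. -/
def radialMax (f : Distribution n) (Φ : 𝓢(Euc n, ℝ)) (x : Euc n) : ℝ≥0∞ :=
  ⨆ (t : ℝ) (ht : 0 < t), (‖distConv f Φ t ht x‖₊ : ℝ≥0∞)

/-- The partial derivative (as an operator on Schwartz functions) in the direction of the
`i`-th standard basis vector. -/
def basisPDeriv (i : Fin n) : 𝓢(Euc n, ℝ) →L[ℝ] 𝓢(Euc n, ℝ) :=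
  LineDeriv.lineDerivOpCLM ℝ 𝓢(Euc n, ℝ) (EuclideanSpace.single i (1 : ℝ))

/-- The multi-index partial derivative `D^β` of a Schwartz function. -/
def mDeriv (β : Fin n → ℕ) (Φ : 𝓢(Euc n, ℝ)) : 𝓢(Euc n, ℝ) :=
  (List.finRange n).foldr (fun i Ψ => (fun Ψ' => basisPDeriv i Ψ')^[β i] Ψ) Φ

/-- The collection `𝓢_N` of Schwartz functions all of whose seminorms
`‖Φ‖_{α,β} = sup_x |x^α D^β Φ(x)|` with `|α|, |β| ≤ N` are at most 1. -/
def schwartzSetN (N : ℕ) : Set 𝓢(Euc n, ℝ) :=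
  {Φ | ∀ α β : Fin n → ℕ, (∑ i, α i) ≤ N → (∑ i, β i) ≤ N →
    ∀ x : Euc n, |(∏ i, x i ^ α i) * mDeriv β Φ x| ≤ 1}

/-- The grand maximal function `𝓜_N f`. -/
def grandMax (N : ℕ) (f : Distribution n) (x : Euc n) : ℝ≥0∞ :=
  ⨆ (Φ : 𝓢(Euc n, ℝ)) (_ : Φ ∈ schwartzSetN N) (t : ℝ) (ht : 0 < t),
    (‖distConv f Φ t ht x‖₊ : ℝ≥0∞)

/-- The `H^{p(·)}` quasi-norm `‖𝓜_N f‖_{p(·)}`. -/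
def hardyNorm (p : Euc n → ℝ) (N : ℕ) (f : Distribution n) : ℝ≥0∞ :=
  luxNorm p (grandMax N f)

/-- The distribution `F` is represented by the locally integrable function `g`. -/
def Represents (F : Distribution n) (g : Euc n → ℝ) : Prop :=
  ∀ φ : 𝓢(Euc n, ℝ), F φ = ∫ x, g x * φ x

/-- The convolution `(g ∗ Φ_t)(x)` of a function `g` with `Φ_t`. -/
def funConv (g : Euc n → ℝ) (Φ : 𝓢(Euc n, ℝ)) (t : ℝ) (x : Euc n) : ℝ :=
  ∫ y : Euc n, g y * ((t ^ n)⁻¹ * Φ (t⁻¹ • (x - y)))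

/-- The radial maximal function `M_{Φ,0} g` of a function `g`. -/
def funRadialMax (g : Euc n → ℝ) (Φ : 𝓢(Euc n, ℝ)) (x : Euc n) : ℝ≥0∞ :=
  ⨆ (t : ℝ) (_ : 0 < t), (‖funConv g Φ t x‖₊ : ℝ≥0∞)

end Schwartz

section Atoms

/-- The (ℝ≥0∞-valued) characteristic function of the closed ball `B(x₀, r)`. -/
def ballInd (x₀ : Euc n) (r : ℝ) : Euc n → ℝ≥0∞ := (closedBall x₀ r).indicator 1

/-- `‖χ_B‖_{p(·)}` for the ball `B = B(x₀,r)`. -/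
def ballNorm (p : Euc n → ℝ) (x₀ : Euc n) (r : ℝ) : ℝ≥0∞ := luxNorm p (ballInd x₀ r)

/-- A `(p(·), ∞)` atom supported on the ball `B(x₀, r)`. -/
structure IsAtomInf (p : Euc n → ℝ) (p₀ : ℝ) (a : Euc n → ℝ) (x₀ : Euc n) (r : ℝ) : Prop where
  meas : Measurable a
  r_pos : 0 < r
  supp : ∀ x ∉ closedBall x₀ r, a x = 0
  size : ∀ᵐ x ∂(volume : Measure (Euc n)), (‖a x‖₊ : ℝ≥0∞) ≤ (ballNorm p x₀ r)⁻¹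
  moments : ∀ α : Fin n → ℕ, ((∑ i, α i : ℕ) : ℤ) ≤ ⌊(n : ℝ) * (1 / p₀ - 1)⌋ →
    ∫ x : Euc n, a x * ∏ i, (x i) ^ α i = 0

/-- A `(p(·), q)` atom supported on the ball `B(x₀, r)`. -/
structure IsAtomQ (p : Euc n → ℝ) (p₀ q : ℝ) (a : Euc n → ℝ) (x₀ : Euc n) (r : ℝ) : Prop where
  meas : Measurable a
  r_pos : 0 < r
  supp : ∀ x ∉ closedBall x₀ r, a x = 0
  size : (∫⁻ x, (‖a x‖₊ : ℝ≥0∞) ^ q) ^ (1 / q) ≤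
    (volume (closedBall x₀ r)) ^ (1 / q) * (ballNorm p x₀ r)⁻¹
  moments : ∀ α : Fin n → ℕ, ((∑ i, α i : ℕ) : ℤ) ≤ ⌊(n : ℝ) * (1 / p₀ - 1)⌋ →
    ∫ x : Euc n, a x * ∏ i, (x i) ^ α i = 0

/-- The function `Σ_j λ_j χ_{B_j} / ‖χ_{B_j}‖_{p(·)}` associated to an atomic decomposition. -/
def atomSumFn (p : Euc n → ℝ) (lam : ℕ → ℝ) (x₀ : ℕ → Euc n) (r : ℕ → ℝ) : Euc n → ℝ≥0∞ :=
  fun x => ∑' j, ENNReal.ofReal (lam j) * (ballNorm p (x₀ j) (r j))⁻¹ * ballInd (x₀ j) (r j) x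

end Atoms

section Weights

/-- `w` is an `A₁` weight with constant (at most) `A`. -/
def IsA1 (w : Euc n → ℝ) (A : ℝ) : Prop :=
  Measurable w ∧ LocallyIntegrable w volume ∧
    (∀ᵐ x ∂(volume : Measure (Euc n)), 0 < w x) ∧
    ∀ᵐ x ∂(volume : Measure (Euc n)), maximalOp w x ≤ ENNReal.ofReal A * ENNReal.ofReal (w x)

/-- `w` satisfies the reverse Hölder inequality with exponent `s` and constant (at most) `A`. -/
def IsRH (w : Euc n → ℝ) (s A : ℝ) : Prop :=
  ∀ (x : Euc n) (r : ℝ), 0 < r →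
    ((volume (closedBall x r))⁻¹ * ∫⁻ y in closedBall x r, ENNReal.ofReal (w y) ^ s) ^ (1 / s) ≤
      ENNReal.ofReal A *
        ((volume (closedBall x r))⁻¹ * ∫⁻ y in closedBall x r, ENNReal.ofReal (w y))

/-- The conjugate exponent `s' = s/(s-1)`. -/
def conjExp (s : ℝ) : ℝ := s / (s - 1)

end Weights


/-- The non-tangential maximal function `M_{Φ,1} f` with aperture 1. -/
def ntMax (f : Distribution n) (Φ : 𝓢(Euc n, ℝ)) (x : Euc n) : ℝ≥0∞ :=
  ⨆ (t : ℝ) (ht : 0 < t) (y : Euc n) (_ : dist x y < t), (‖distConv f Φ t ht y‖₊ : ℝ≥0∞)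

/-- The tangential maximal function `M_{Φ,T} f`. -/
def tangMax (f : Distribution n) (Φ : 𝓢(Euc n, ℝ)) (T : ℝ) (x : Euc n) : ℝ≥0∞ :=
  ⨆ (t : ℝ) (ht : 0 < t) (y : Euc n),
    (‖distConv f Φ t ht (x - y)‖₊ : ℝ≥0∞) * ENNReal.ofReal ((1 + ‖y‖ / t) ^ (-T))

/-! For `t > 0` and `y`, the value `|f ∗ Φ_t (x - y)|` is a lower bound of `M_{Φ,1} f` on the ball
`B(x - y, t)`, which lies in the cube centred at `x` of half side `|y| + t`. Averaging
`(M_{Φ,1} f)^q` over that cube gives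
`|f ∗ Φ_t (x - y)|^q ≤ 2^n / |B(0,1)| · ((|y| + t) / t)^n · M((M_{Φ,1} f)^q)(x)`,
and for `q = n/T` the factor `((|y| + t) / t)^n` is exactly the reciprocal of the `q`-th power of
the weight `(1 + |y|/t)^{-T}`. -/

lemma closedBall_subset_cube (c : Euc n) (r : ℝ) : closedBall c r ⊆ cube c r := fun z hz i => by
  simpa [← Real.norm_eq_abs] using
    (PiLp.norm_apply_le (z - c) i).trans (mem_closedBall_iff_norm.1 hz)

lemma volume_cube (c : Euc n) (r : ℝ) : volume (cube c r) = ENNReal.ofReal (2 * r) ^ n := by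
  have hcube : cube c r = (MeasurableEquiv.toLp 2 (Fin n → ℝ)).symm ⁻¹'
      Set.univ.pi fun i => Set.Icc (c i - r) (c i + r) := by
    ext z
    simp only [cube, Set.mem_ofPred_eq, Set.mem_preimage, Set.mem_univ_pi, Set.mem_Icc,
      MeasurableEquiv.coe_toLp_symm, abs_sub_le_iff]
    exact forall_congr' fun i => by constructor <;> rintro ⟨h₁, h₂⟩ <;> constructor <;> linarith
  rw [hcube, (EuclideanSpace.volume_preserving_symm_measurableEquiv_toLp (Fin n)).measure_preimage
    (MeasurableSet.univ_pi fun _ => measurableSet_Icc).nullMeasurableSet, volume_pi_pi]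
  simp [Real.volume_Icc, two_mul]

lemma volume_cube_ne_top (c : Euc n) (r : ℝ) : volume (cube c r) ≠ ∞ := by
  rw [volume_cube]; exact ENNReal.pow_ne_top ENNReal.ofReal_ne_top

lemma volume_cube_ne_zero (c : Euc n) {r : ℝ} (hr : 0 < r) : volume (cube c r) ≠ 0 := by
  rw [volume_cube]; exact pow_ne_zero _ (ENNReal.ofReal_pos.2 (by positivity)).ne'

lemma setLIntegral_cube_le_mul_maximalFn (g : Euc n → ℝ≥0∞) {c x : Euc n} {r : ℝ} (hr : 0 < r)
    (hx : x ∈ cube c r) : ∫⁻ y in cube c r, g y ≤ volume (cube c r) * maximalFn g x := by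
  rw [← ENNReal.inv_mul_le_iff (volume_cube_ne_zero c hr) (volume_cube_ne_top c r)]
  exact le_iSup_of_le c <| le_iSup_of_le r <| le_iSup_of_le hr <| le_iSup_of_le hx le_rfl

lemma mul_volume_ball_le_mul_maximalFn {g : Euc n → ℝ≥0∞} {a : ℝ≥0∞} {z : Euc n} {t : ℝ}
    (ht : 0 < t) (hg : ∀ w ∈ ball z t, a ≤ g w) (x : Euc n) :
    a * volume (ball z t) ≤ volume (cube x (dist x z + t)) * maximalFn g x := by
  have hsub : ball z t ⊆ cube x (dist x z + t) := by
    refine ball_subset_closedBall.trans (.trans ?_ (closedBall_subset_cube x _))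
    exact closedBall_subset_closedBall' (by rw [dist_comm, add_comm])
  calc a * volume (ball z t) = ∫⁻ _ in ball z t, a := (setLIntegral_const _ _).symm
    _ ≤ ∫⁻ w in ball z t, g w := setLIntegral_mono' measurableSet_ball hg
    _ ≤ ∫⁻ w in cube x (dist x z + t), g w := lintegral_mono_set hsub
    _ ≤ _ := setLIntegral_cube_le_mul_maximalFn g (by positivity) fun i => by simp; positivity

lemma nnnorm_distConv_le_ntMax (f : Distribution n) (Φ : 𝓢(Euc n, ℝ)) {t : ℝ} (ht : 0 < t)
    {y z : Euc n} (h : dist z y < t) : (‖distConv f Φ t ht y‖₊ : ℝ≥0∞) ≤ ntMax f Φ z :=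
  le_iSup_of_le t <| le_iSup_of_le ht <| le_iSup_of_le y <| le_iSup_of_le h le_rfl

lemma ofReal_rpow_neg_rpow_div {ρ T : ℝ} (hρ : 0 < ρ) (hT : T ≠ 0) (n : ℕ) :
    ENNReal.ofReal (ρ ^ (-T)) ^ ((n : ℝ) / T) = ENNReal.ofReal ρ⁻¹ ^ n := by
  rw [ENNReal.ofReal_rpow_of_pos (Real.rpow_pos_of_pos hρ _), ← Real.rpow_mul hρ.le,
    neg_mul, mul_div_cancel₀ _ hT, Real.rpow_neg hρ.le, Real.rpow_natCast, ← inv_pow,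
    ENNReal.ofReal_pow (by positivity)]

lemma tangMax_term_rpow_le (f : Distribution n) (Φ : 𝓢(Euc n, ℝ)) {T : ℝ} (hT : 0 < T) {t : ℝ}
    (ht : 0 < t) (x y : Euc n) :
    ((‖distConv f Φ t ht (x - y)‖₊ : ℝ≥0∞) * ENNReal.ofReal ((1 + ‖y‖ / t) ^ (-T))) ^ ((n : ℝ) / T)
      ≤ 2 ^ n * (volume (ball (0 : Euc n) 1))⁻¹ *
        maximalFn (fun z => ntMax f Φ z ^ ((n : ℝ) / T)) x := by
  set q : ℝ := (n : ℝ) / T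
  set a : ℝ≥0∞ := (‖distConv f Φ t ht (x - y)‖₊ : ℝ≥0∞)
  set M := maximalFn (fun z => ntMax f Φ z ^ q) x
  set v₁ := volume (ball (0 : Euc n) 1)
  have hq : 0 ≤ q := by positivity
  have hdist : dist x (x - y) = ‖y‖ := by simp
  have hball : a ^ q * volume (ball (x - y) t) ≤ volume (cube x (‖y‖ + t)) * M := by
    rw [← hdist]
    exact mul_volume_ball_le_mul_maximalFn ht (fun w hw =>
      ENNReal.rpow_le_rpow (nnnorm_distConv_le_ntMax f Φ ht (mem_ball.1 hw)) hq) x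
  have hweight : ENNReal.ofReal ((1 + ‖y‖ / t) ^ (-T)) ^ q * volume (cube x (‖y‖ + t)) =
      2 ^ n * v₁⁻¹ * volume (ball (x - y) t) := by
    have hv₁ : v₁ ≠ 0 := (measure_ball_pos _ _ one_pos).ne'
    have hv₁' : v₁ ≠ ∞ := measure_ball_lt_top.ne
    have hradii : (1 + ‖y‖ / t)⁻¹ * (2 * (‖y‖ + t)) = 2 * t := by field_simp; ring
    rw [ofReal_rpow_neg_rpow_div (by positivity) hT.ne', volume_cube, ← mul_pow,
      ← ENNReal.ofReal_mul (by positivity), hradii, Measure.addHaar_ball_of_pos _ _ ht,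
      finrank_euclideanSpace_fin, ENNReal.ofReal_mul zero_le_two, ENNReal.ofReal_pow ht.le,
      mul_pow, ENNReal.ofReal_ofNat, mul_assoc, mul_left_comm v₁⁻¹, ENNReal.inv_mul_cancel hv₁ hv₁',
      mul_one]
  have hr : 0 < ‖y‖ + t := by positivity
  rw [← ENNReal.mul_le_mul_iff_left (volume_cube_ne_zero x hr) (volume_cube_ne_top x _)]
  calc (a * ENNReal.ofReal ((1 + ‖y‖ / t) ^ (-T))) ^ q * volume (cube x (‖y‖ + t))
      = 2 ^ n * v₁⁻¹ * (a ^ q * volume (ball (x - y) t)) := by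
        rw [ENNReal.mul_rpow_of_nonneg _ _ hq, mul_assoc, hweight]; ring
    _ ≤ 2 ^ n * v₁⁻¹ * (volume (cube x (‖y‖ + t)) * M) := by gcongr
    _ = 2 ^ n * v₁⁻¹ * M * volume (cube x (‖y‖ + t)) := by ring

/-- with `q = n/T`, `M_{Φ,T}f(x)^q ≤ C(n) · M((M_{Φ,1}f)^q)(x)`. -/
theorem statement1 {n : ℕ} (hn : 1 ≤ n) (Φ : 𝓢(Euc n, ℝ)) (T : ℝ) (hT : 0 < T) :
    ∃ C : ℝ≥0∞, C < ∞ ∧ ∀ (f : Distribution n) (x : Euc n),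
      tangMax f Φ T x ^ ((n : ℝ) / T) ≤
        C * maximalFn (fun y => ntMax f Φ y ^ ((n : ℝ) / T)) x := by
  have hq : 0 < (n : ℝ) / T := div_pos (by exact_mod_cast hn) hT
  refine ⟨2 ^ n * (volume (ball (0 : Euc n) 1))⁻¹, ?_, fun f x => ?_⟩
  · exact ENNReal.mul_lt_top (by simp) (ENNReal.inv_lt_top.2 (measure_ball_pos _ _ one_pos))
  rw [← ENNReal.le_rpow_inv_iff hq]
  refine iSup_le fun t => iSup_le fun ht => iSup_le fun y => ?_
  exact (ENNReal.le_rpow_inv_iff hq).2 (tangMax_term_rpow_le f Φ hT ht x y)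

end VarHardy
end
end

section
/- (Pointwise decay of a singular integral applied to an atom.) Let n ≥ 1, 0 < p₀ ≤ 1, d = ⌊n(1/p₀ − 1)⌋, and 1 < s < ∞. Let K : ℝⁿ∖{0} → ℂ be (d+1)-times continuously differentiable with |∂^β K(x)| ≤ C₀ |x|^{−n−|β|} for all multi-indices β with |β| ≤ d+1 and all x ≠ 0. Let p(·) ∈ M𝒫₀ with exponent p₀, and let a be a (p(·), s) atom supported on the ball B = B(x₀, r). Then for every x with |x − x₀| ≥ 2r, | ∫_B K(x−y) a(y) dy | ≤ C |B|^{1 + (d+1)/n} ‖χ_B‖_{p(·)}^{−1} |x − x₀|^{−(n+d+1)}, where C depends only on C₀, n, p₀ and s. -/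
open MeasureTheory Metric Filter Topology ENNReal SchwartzMap
open scoped NNReal

noncomputable section

namespace VarHardy

variable {n : ℕ}

/-!
Let `B = B(x₀, r)` and subtract from `y ↦ K (x - y)` its Taylor polynomial `T` of degree `d`
at `x - x₀`. Each term of `T` is a polynomial of degree `≤ d` in `y`, so the vanishing moments
of the atom give `∫_B K (x - y) a(y) dy = ∫_B (K (x - y) - T y) a(y) dy`. Since
`|x - y| ≥ |x - x₀| / 2` on `B`, Taylor's formula and the bound on `D^{d+1} K` give
`|K (x - y) - T y| ≲ r^{d+1} |x - x₀|^{-(n+d+1)}`, while Hölder's inequality and the size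
condition give `‖a‖_{L¹} ≤ |B| ‖χ_B‖_{p(·)}⁻¹`. Finally `r^{d+1} = c_n |B|^{(d+1)/n}`.
-/

open scoped Nat

section Moments

def HasVanishingMomentsOn (μ : Measure (Euc n)) (s : Set (Euc n)) (a : Euc n → ℝ) (d : ℕ) :
    Prop :=
  ∀ α : Fin n → ℕ, ∑ i, α i ≤ d → ∫ x in s, a x * ∏ i, x i ^ α i ∂μ = 0

variable {μ : Measure (Euc n)} {s : Set (Euc n)} {a : Euc n → ℝ} {d : ℕ}

theorem HasVanishingMomentsOn.setIntegral_mul_eval_eq_zero (hmom : HasVanishingMomentsOn μ s a d)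
    (hs : IsCompact s) (ha : IntegrableOn a s μ) {P : MvPolynomial (Fin n) ℝ}
    (hP : P.totalDegree ≤ d) :
    ∫ x in s, a x * MvPolynomial.eval x.ofLp P ∂μ = 0 := by
  have hexpand : ∀ x : Euc n, a x * MvPolynomial.eval x.ofLp P =
      ∑ m ∈ P.support, P.coeff m * (a x * ∏ i, x i ^ m i) := by
    intro x
    conv_lhs => rw [P.as_sum, map_sum, Finset.mul_sum]
    refine Finset.sum_congr rfl fun m _ => ?_
    rw [MvPolynomial.eval_monomial, Finsupp.prod_fintype _ _ (by simp)]
    ring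
  simp_rw [hexpand]
  rw [integral_finsetSum _ fun m _ => (ha.mul_continuousOn (by fun_prop) hs).const_mul _]
  refine Finset.sum_eq_zero fun m hm => ?_
  have hdeg : ∑ i, m i ≤ d := by
    simpa [Finsupp.sum_fintype] using (MvPolynomial.le_totalDegree hm).trans hP
  rw [integral_const_mul, hmom m hdeg, mul_zero]

theorem continuousMultilinearMap_apply_const_eq_sum_single {F : Type*} [NormedAddCommGroup F]
    [NormedSpace ℝ F] {k : ℕ} (W : ContinuousMultilinearMap ℝ (fun _ : Fin k => Euc n) F)
    (z : Euc n) :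
    W (fun _ => z) = ∑ g : Fin k → Fin n,
      (∏ j, z (g j)) • W (fun j => EuclideanSpace.single (g j) (1 : ℝ)) := by
  have hz : z = ∑ i, z i • EuclideanSpace.single i (1 : ℝ) := by
    simpa using ((EuclideanSpace.basisFun (Fin n) ℝ).sum_repr z).symm
  conv_lhs => rw [hz, W.map_sum]
  exact Finset.sum_congr rfl fun g _ => W.map_smul_univ _ _

open MvPolynomial in
theorem totalDegree_prod_C_sub_X_le {k : ℕ} (c : Fin n → ℝ) (g : Fin k → Fin n) :
    (∏ j, (C (c (g j)) - X (g j)) : MvPolynomial (Fin n) ℝ).totalDegree ≤ k := by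
  refine (totalDegree_finsetProd _ _).trans ?_
  calc ∑ j, (C (c (g j)) - X (g j) : MvPolynomial (Fin n) ℝ).totalDegree
      ≤ ∑ _j : Fin k, 1 := Finset.sum_le_sum fun j _ =>
        (totalDegree_sub _ _).trans (by simp)
    _ = k := by simp

open MvPolynomial in
theorem HasVanishingMomentsOn.setIntegral_smul_multilinear_sub_eq_zero {F : Type*}
    [NormedAddCommGroup F] [NormedSpace ℝ F] [CompleteSpace F]
    (hmom : HasVanishingMomentsOn μ s a d) (hs : IsCompact s) (ha : IntegrableOn a s μ)
    {k : ℕ} (hk : k ≤ d) (W : ContinuousMultilinearMap ℝ (fun _ : Fin k => Euc n) F)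
    (c : Euc n) :
    ∫ y in s, a y • W (fun _ => c - y) ∂μ = 0 := by
  set P : (Fin k → Fin n) → MvPolynomial (Fin n) ℝ := fun g => ∏ j, (C (c (g j)) - X (g j))
  have hexpand : ∀ y : Euc n, a y • W (fun _ => c - y) = ∑ g : Fin k → Fin n,
      (a y * eval y.ofLp (P g)) • W (fun j => EuclideanSpace.single (g j) (1 : ℝ)) := by
    intro y
    rw [continuousMultilinearMap_apply_const_eq_sum_single, Finset.smul_sum]
    refine Finset.sum_congr rfl fun g _ => ?_
    simp [P, smul_smul]
  have hPcont : ∀ g, ContinuousOn (fun y : Euc n => eval y.ofLp (P g)) s := fun g =>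
    ((continuous_eval _).comp (PiLp.continuous_ofLp 2 _)).continuousOn
  simp_rw [hexpand]
  rw [integral_finsetSum _ fun g _ => (ha.mul_continuousOn (hPcont g) hs).smul_const _]
  refine Finset.sum_eq_zero fun g _ => ?_
  rw [integral_smul_const, hmom.setIntegral_mul_eval_eq_zero hs ha
    ((totalDegree_prod_C_sub_X_le _ g).trans hk), zero_smul]

end Moments

theorem norm_sub_taylor_le_of_norm_iteratedFDeriv_le {E F : Type*} [NormedAddCommGroup E]
    [NormedSpace ℝ E] [NormedAddCommGroup F] [NormedSpace ℝ F] [CompleteSpace F] {f : E → F}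
    {x y : E} {d : ℕ} {M : ℝ}
    (hf : ∀ t ∈ Set.Icc (0 : ℝ) 1, ContDiffAt ℝ (d + 1) f (x + t • y))
    (hM : ∀ t ∈ Set.Icc (0 : ℝ) 1, ‖iteratedFDeriv ℝ (d + 1) f (x + t • y)‖ ≤ M) :
    ‖f (x + y) - ∑ k ∈ Finset.range (d + 1), (k ! : ℝ)⁻¹ • iteratedFDeriv ℝ k f x (fun _ => y)‖
      ≤ M * ‖y‖ ^ (d + 1) / d ! := by
  rw [map_add_eq_sum_add_integral_iteratedFDeriv hf, add_sub_cancel_left, norm_smul,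
    norm_inv, RCLike.norm_natCast, inv_mul_eq_div]
  gcongr
  refine (intervalIntegral.norm_integral_le_of_norm_le_const
    (C := M * ‖y‖ ^ (d + 1)) fun t ht => ?_).trans_eq (by simp)
  rw [Set.uIoc_of_le zero_le_one] at ht
  have ht' : t ∈ Set.Icc (0 : ℝ) 1 := Set.Ioc_subset_Icc_self ht
  rw [norm_smul, norm_pow, Real.norm_of_nonneg (sub_nonneg.2 ht'.2)]
  calc (1 - t) ^ d * ‖iteratedFDeriv ℝ (d + 1) f (x + t • y) (fun _ => y)‖
      ≤ 1 * (‖iteratedFDeriv ℝ (d + 1) f (x + t • y)‖ * ‖y‖ ^ (d + 1)) := by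
        gcongr
        · exact pow_le_one₀ (sub_nonneg.2 ht'.2) (by linarith [ht'.1])
        · simpa using (iteratedFDeriv ℝ (d + 1) f (x + t • y)).le_opNorm fun _ => y
    _ ≤ M * ‖y‖ ^ (d + 1) := by
        rw [one_mul]
        gcongr
        exact hM t ht'

theorem half_norm_le_norm_add {E : Type*} [SeminormedAddCommGroup E] {c v : E}
    (hv : 2 * ‖v‖ ≤ ‖c‖) : ‖c‖ / 2 ≤ ‖c + v‖ := by
  have h := norm_sub_norm_le c (-v)
  rw [norm_neg, sub_neg_eq_add] at h
  linarith

theorem enorm_setIntegral_smul_le_of_norm_le {α F : Type*} [MeasurableSpace α]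
    [NormedAddCommGroup F] [NormedSpace ℝ F] {μ : Measure α} {s : Set α} (hs : MeasurableSet s)
    {a : α → ℝ} {g : α → F} {c : ℝ} (hg : ∀ y ∈ s, ‖g y‖ ≤ c) :
    ‖∫ y in s, a y • g y ∂μ‖ₑ ≤ ENNReal.ofReal c * ∫⁻ y in s, ‖a y‖ₑ ∂μ := by
  refine (enorm_integral_le_lintegral_enorm _).trans ?_
  rw [← lintegral_const_mul' _ _ ENNReal.ofReal_ne_top]
  refine setLIntegral_mono' hs fun y hy => ?_
  rw [← ofReal_norm, ← ofReal_norm, norm_smul, mul_comm, ← ENNReal.ofReal_mul' (norm_nonneg _)]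
  exact ENNReal.ofReal_le_ofReal (mul_le_mul_of_nonneg_right (hg y hy) (norm_nonneg _))

section Kernel

variable {F : Type*} [NormedAddCommGroup F] [NormedSpace ℝ F] [CompleteSpace F]
  {K : Euc n → F} {d : ℕ} {C₀ : ℝ}

theorem norm_kernel_sub_taylor_le (hK : ContDiffOn ℝ (d + 1 : ℕ) K {(0 : Euc n)}ᶜ)
    (hC₀ : 0 ≤ C₀)
    (hKb : ∀ z : Euc n, z ≠ 0 → ‖iteratedFDerivWithin ℝ (d + 1) K {(0 : Euc n)}ᶜ z‖ ≤
      C₀ * ‖z‖ ^ (-(n : ℝ) - (d + 1 : ℕ)))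
    {c v : Euc n} (hc : c ≠ 0) (hv : 2 * ‖v‖ ≤ ‖c‖) :
    ‖K (c + v) - ∑ k ∈ Finset.range (d + 1), (k ! : ℝ)⁻¹ • iteratedFDeriv ℝ k K c (fun _ => v)‖
      ≤ C₀ * 2 ^ ((n : ℝ) + d + 1) / d ! * ‖v‖ ^ (d + 1) * ‖c‖ ^ (-((n : ℝ) + d + 1)) := by
  have hc' : 0 < ‖c‖ := norm_pos_iff.2 hc
  have hseg : ∀ t ∈ Set.Icc (0 : ℝ) 1, ‖c‖ / 2 ≤ ‖c + t • v‖ := by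
    intro t ht
    refine half_norm_le_norm_add (le_trans ?_ hv)
    rw [norm_smul, Real.norm_of_nonneg ht.1]
    nlinarith [norm_nonneg v, ht.2]
  have hseg_ne : ∀ t ∈ Set.Icc (0 : ℝ) 1, c + t • v ≠ 0 := fun t ht =>
    norm_pos_iff.1 ((half_pos hc').trans_le (hseg t ht))
  have hexp_nonpos : -(n : ℝ) - (d + 1 : ℕ) ≤ 0 := by
    linarith [n.cast_nonneg (α := ℝ), (d + 1).cast_nonneg (α := ℝ)]
  have hderiv : ∀ t ∈ Set.Icc (0 : ℝ) 1,
      ‖iteratedFDeriv ℝ (d + 1) K (c + t • v)‖ ≤ C₀ * (‖c‖ / 2) ^ (-(n : ℝ) - (d + 1 : ℕ)) := by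
    intro t ht
    rw [← iteratedFDerivWithin_of_isOpen _ isOpen_compl_singleton (hseg_ne t ht)]
    refine (hKb _ (hseg_ne t ht)).trans ?_
    exact mul_le_mul_of_nonneg_left
      (Real.rpow_le_rpow_of_nonpos (half_pos hc') (hseg t ht) hexp_nonpos) hC₀
  have hf : ∀ t ∈ Set.Icc (0 : ℝ) 1, ContDiffAt ℝ (d + 1) K (c + t • v) := fun t ht => by
    exact_mod_cast hK.contDiffAt (isOpen_compl_singleton.mem_nhds (hseg_ne t ht))
  refine (norm_sub_taylor_le_of_norm_iteratedFDeriv_le hf hderiv).trans_eq ?_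
  have hexp : -(n : ℝ) - (d + 1 : ℕ) = -((n : ℝ) + d + 1) := by push_cast; ring
  rw [hexp, Real.div_rpow hc'.le zero_le_two, Real.rpow_neg zero_le_two]
  field_simp

theorem HasVanishingMomentsOn.setIntegral_smul_taylor_eq_zero {μ : Measure (Euc n)}
    {s : Set (Euc n)} {a : Euc n → ℝ} (hmom : HasVanishingMomentsOn μ s a d) (hs : IsCompact s)
    (ha : IntegrableOn a s μ) (c x₀ : Euc n) :
    ∫ y in s, a y • ∑ k ∈ Finset.range (d + 1),
      (k ! : ℝ)⁻¹ • iteratedFDeriv ℝ k K c (fun _ => x₀ - y) ∂μ = 0 := by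
  simp_rw [Finset.smul_sum, smul_comm (a _)]
  rw [integral_finsetSum]
  · refine Finset.sum_eq_zero fun k hk => ?_
    rw [integral_smul, hmom.setIntegral_smul_multilinear_sub_eq_zero hs ha
      (Nat.lt_succ_iff.1 (Finset.mem_range.1 hk)), smul_zero]
  · exact fun k _ => (ha.smul_continuousOn (Continuous.continuousOn (by fun_prop)) hs).smul _

theorem enorm_setIntegral_smul_kernel_le {μ : Measure (Euc n)}
    (hK : ContDiffOn ℝ (d + 1 : ℕ) K {(0 : Euc n)}ᶜ)
    (hKbound : ∀ k : ℕ, k ≤ d + 1 → ∀ x : Euc n, x ≠ 0 →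
      ‖iteratedFDerivWithin ℝ k K {(0 : Euc n)}ᶜ x‖ ≤ C₀ * ‖x‖ ^ (-(n : ℝ) - k))
    {a : Euc n → ℝ} {x₀ x : Euc n} {r : ℝ} (ha : IntegrableOn a (closedBall x₀ r) μ)
    (hmom : HasVanishingMomentsOn μ (closedBall x₀ r) a d) (hr : 0 < r)
    (hx : 2 * r ≤ ‖x - x₀‖) :
    ‖∫ y in closedBall x₀ r, a y • K (x - y) ∂μ‖ₑ ≤
      ENNReal.ofReal (C₀ * 2 ^ ((n : ℝ) + d + 1) / d ! * r ^ (d + 1) *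
        ‖x - x₀‖ ^ (-((n : ℝ) + d + 1))) * ∫⁻ y in closedBall x₀ r, ‖a y‖ₑ ∂μ := by
  set c := x - x₀
  have hc : c ≠ 0 := norm_pos_iff.1 (by linarith)
  have hC₀ : 0 ≤ C₀ := by
    have h := (norm_nonneg _).trans (hKbound 0 (Nat.zero_le _) c hc)
    exact nonneg_of_mul_nonneg_left h (Real.rpow_pos_of_pos (norm_pos_iff.2 hc) _)
  have hsub : ∀ y, x - y = c + (x₀ - y) := fun y => by simp [c]
  have hmem : ∀ y ∈ closedBall x₀ r, ‖x₀ - y‖ ≤ r ∧ 2 * ‖x₀ - y‖ ≤ ‖c‖ := fun y hy => by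
    rw [mem_closedBall, dist_comm, dist_eq_norm] at hy
    constructor <;> linarith
  have hne : ∀ y ∈ closedBall x₀ r, x - y ≠ 0 := fun y hy => by
    rw [hsub, ← norm_pos_iff]
    linarith [half_norm_le_norm_add (hmem y hy).2, norm_pos_iff.2 hc]
  set T : Euc n → F := fun y => ∑ k ∈ Finset.range (d + 1),
    (k ! : ℝ)⁻¹ • iteratedFDeriv ℝ k K c (fun _ => x₀ - y)
  have hbound : ∀ y ∈ closedBall x₀ r, ‖K (x - y) - T y‖ ≤
      C₀ * 2 ^ ((n : ℝ) + d + 1) / d ! * r ^ (d + 1) * ‖x - x₀‖ ^ (-((n : ℝ) + d + 1)) := by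
    intro y hy
    rw [hsub]
    refine (norm_kernel_sub_taylor_le hK hC₀ (hKbound (d + 1) le_rfl) hc (hmem y hy).2).trans ?_
    gcongr
    exact (hmem y hy).1
  have hB : IsCompact (closedBall x₀ r) := isCompact_closedBall x₀ r
  have hKint : IntegrableOn (fun y => a y • K (x - y)) (closedBall x₀ r) μ :=
    ha.smul_continuousOn (hK.continuousOn.comp (by fun_prop) hne) hB
  have hTint : IntegrableOn (fun y => a y • T y) (closedBall x₀ r) μ :=
    ha.smul_continuousOn (Continuous.continuousOn (by fun_prop)) hB
  calc ‖∫ y in closedBall x₀ r, a y • K (x - y) ∂μ‖ₑ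
      = ‖∫ y in closedBall x₀ r, a y • (K (x - y) - T y) ∂μ‖ₑ := by
        simp_rw [smul_sub]
        rw [integral_sub hKint hTint, hmom.setIntegral_smul_taylor_eq_zero hB ha, sub_zero]
    _ ≤ _ := enorm_setIntegral_smul_le_of_norm_le measurableSet_closedBall hbound

end Kernel

theorem setLIntegral_enorm_le_of_lintegral_rpow_le {α : Type*} [MeasurableSpace α]
    {μ : Measure α} {f : α → ℝ} (hf : AEStronglyMeasurable f μ) {s : Set α} {q : ℝ}
    (hq : 1 ≤ q) {N : ℝ≥0∞} (h : (∫⁻ x, ‖f x‖ₑ ^ q ∂μ) ^ (1 / q) ≤ μ s ^ (1 / q) * N) :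
    ∫⁻ x in s, ‖f x‖ₑ ∂μ ≤ μ s * N := by
  have hHolder := eLpNorm'_le_eLpNorm'_mul_rpow_measure_univ one_pos hq (hf.restrict (s := s))
  simp only [eLpNorm'_eq_lintegral_enorm, ENNReal.rpow_one, div_one,
    Measure.restrict_apply_univ] at hHolder
  have hrestrict : (∫⁻ x in s, ‖f x‖ₑ ^ q ∂μ) ^ (1 / q) ≤ μ s ^ (1 / q) * N :=
    (ENNReal.rpow_le_rpow (setLIntegral_le_lintegral _ _) (by positivity)).trans h
  calc ∫⁻ x in s, ‖f x‖ₑ ∂μ ≤ μ s ^ (1 / q) * N * μ s ^ (1 - 1 / q) :=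
        hHolder.trans (mul_le_mul_left hrestrict _)
    _ = μ s * N := by
        rw [mul_right_comm, ← ENNReal.rpow_add_of_nonneg _ _ (by positivity)
          (sub_nonneg.2 ((div_le_one (by linarith)).2 hq)), add_sub_cancel, ENNReal.rpow_one]

theorem volume_closedBall_rpow_one_add_natCast_div (hn : n ≠ 0) (x : Euc n) {r : ℝ}
    (hr : 0 ≤ r) (m : ℕ) :
    volume (closedBall x r) ^ (1 + (m : ℝ) / n) = volume (closedBall x r) *
      (ENNReal.ofReal (r ^ m) * volume (ball (0 : Euc n) 1) ^ ((m : ℝ) / n)) := by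
  rw [ENNReal.rpow_add_of_nonneg _ _ zero_le_one (by positivity), ENNReal.rpow_one]
  congr 1
  rw [Measure.addHaar_closedBall volume x hr, finrank_euclideanSpace_fin,
    ENNReal.mul_rpow_of_nonneg _ _ (by positivity),
    ENNReal.ofReal_rpow_of_nonneg (pow_nonneg hr n) (by positivity), ← Real.rpow_natCast r n,
    ← Real.rpow_mul hr, mul_div_cancel₀ _ (Nat.cast_ne_zero.2 hn), Real.rpow_natCast]

theorem IsAtomQ.enorm_setIntegral_kernel_mul_le {p : Euc n → ℝ} {p₀ s : ℝ} {a : Euc n → ℝ}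
    {x₀ : Euc n} {r : ℝ} (ha : IsAtomQ p p₀ s a x₀ r) (hs : 1 ≤ s)
    (hN : ballNorm p x₀ r ≠ 0) {d : ℕ} (hd : (d : ℤ) = ⌊(n : ℝ) * (1 / p₀ - 1)⌋)
    {C₀ : ℝ} {K : Euc n → ℂ} (hK : ContDiffOn ℝ (d + 1 : ℕ) K {(0 : Euc n)}ᶜ)
    (hKbound : ∀ k : ℕ, k ≤ d + 1 → ∀ x : Euc n, x ≠ 0 →
      ‖iteratedFDerivWithin ℝ k K {(0 : Euc n)}ᶜ x‖ ≤ C₀ * ‖x‖ ^ (-(n : ℝ) - k))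
    {x : Euc n} (hx : 2 * r ≤ ‖x - x₀‖) :
    ‖∫ y in closedBall x₀ r, K (x - y) * (a y : ℂ)‖ₑ ≤
      ENNReal.ofReal (C₀ * 2 ^ ((n : ℝ) + d + 1) / d ! * r ^ (d + 1) *
        ‖x - x₀‖ ^ (-((n : ℝ) + d + 1))) * (volume (closedBall x₀ r) * (ballNorm p x₀ r)⁻¹) := by
  have hL1 : ∫⁻ y in closedBall x₀ r, ‖a y‖ₑ ≤ volume (closedBall x₀ r) * (ballNorm p x₀ r)⁻¹ :=
    setLIntegral_enorm_le_of_lintegral_rpow_le ha.meas.aestronglyMeasurable hs ha.size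
  have hint : IntegrableOn a (closedBall x₀ r) := ⟨ha.meas.aestronglyMeasurable.restrict,
    hL1.trans_lt (ENNReal.mul_lt_top measure_closedBall_lt_top (ENNReal.inv_lt_top.2
      (pos_iff_ne_zero.2 hN)))⟩
  have hmom : HasVanishingMomentsOn volume (closedBall x₀ r) a d := fun α hα => by
    rw [setIntegral_eq_integral_of_forall_compl_eq_zero fun y hy => by rw [ha.supp y hy, zero_mul]]
    exact ha.moments α (by rw [← hd]; exact_mod_cast hα)
  simp_rw [mul_comm (K _), ← Complex.real_smul]
  exact (enorm_setIntegral_smul_kernel_le hK hKbound hint hmom ha.r_pos hx).trans (by gcongr)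

/-- The `+ 1` keeps the constant nonzero, so that the bound of
`IsAtomQ.enorm_setIntegral_kernel_mul_le_decay` is `∞` when `‖χ_B‖_{p(·)} = 0`. -/
def kernelAtomConst (n d : ℕ) (C₀ : ℝ) : ℝ≥0∞ :=
  (ENNReal.ofReal (C₀ * 2 ^ ((n : ℝ) + d + 1) / d !) + 1) *
    (volume (ball (0 : Euc n) 1) ^ (((d : ℝ) + 1) / n))⁻¹

theorem kernelAtomConst_lt_top (n d : ℕ) (C₀ : ℝ) : kernelAtomConst n d C₀ < ∞ := by
  have hball := measure_ball_pos volume (0 : Euc n) one_pos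
  unfold kernelAtomConst
  finiteness

theorem IsAtomQ.enorm_setIntegral_kernel_mul_le_decay {p : Euc n → ℝ} {p₀ s : ℝ}
    {a : Euc n → ℝ} {x₀ : Euc n} {r : ℝ} (ha : IsAtomQ p p₀ s a x₀ r) (hs : 1 ≤ s) {d : ℕ}
    (hd : (d : ℤ) = ⌊(n : ℝ) * (1 / p₀ - 1)⌋) {C₀ : ℝ} {K : Euc n → ℂ}
    (hK : ContDiffOn ℝ (d + 1 : ℕ) K {(0 : Euc n)}ᶜ)
    (hKbound : ∀ k : ℕ, k ≤ d + 1 → ∀ x : Euc n, x ≠ 0 →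
      ‖iteratedFDerivWithin ℝ k K {(0 : Euc n)}ᶜ x‖ ≤ C₀ * ‖x‖ ^ (-(n : ℝ) - k))
    {x : Euc n} (hx : 2 * r ≤ ‖x - x₀‖) :
    ‖∫ y in closedBall x₀ r, K (x - y) * (a y : ℂ)‖ₑ ≤
      kernelAtomConst n d C₀ * volume (closedBall x₀ r) ^ (1 + ((d : ℝ) + 1) / n) *
        (ballNorm p x₀ r)⁻¹ * ENNReal.ofReal (‖x - x₀‖ ^ (-((n : ℝ) + d + 1))) := by
  have hr := ha.r_pos
  have hn : n ≠ 0 := by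
    rintro rfl
    rw [Subsingleton.elim x x₀, sub_self, norm_zero] at hx
    linarith
  set M := C₀ * 2 ^ ((n : ℝ) + d + 1) / (d ! : ℝ)
  set κθ := volume (ball (0 : Euc n) 1) ^ (((d : ℝ) + 1) / n)
  set V := volume (closedBall x₀ r)
  set N := ballNorm p x₀ r
  set O := ENNReal.ofReal (‖x - x₀‖ ^ (-((n : ℝ) + d + 1)))
  by_cases hN : N = 0
  · have hV : V ^ (1 + ((d : ℝ) + 1) / n) ≠ 0 :=
      (ENNReal.rpow_pos (measure_closedBall_pos volume x₀ hr) measure_closedBall_lt_top.ne).ne'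
    have hκθ : κθ ≠ ∞ := ENNReal.rpow_ne_top_of_nonneg (by positivity) measure_ball_lt_top.ne
    have hO : O ≠ 0 := (ENNReal.ofReal_pos.2 (Real.rpow_pos_of_pos (by linarith) _)).ne'
    have hC : kernelAtomConst n d C₀ * V ^ (1 + ((d : ℝ) + 1) / n) ≠ 0 :=
      mul_ne_zero (mul_ne_zero (by simp) (ENNReal.inv_ne_zero.2 hκθ)) hV
    rw [hN, ENNReal.inv_zero, ENNReal.mul_top hC, ENNReal.top_mul hO]
    exact le_top
  have hκθ : κθ⁻¹ * κθ = 1 := ENNReal.inv_mul_cancel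
    (ENNReal.rpow_pos (measure_ball_pos volume 0 one_pos) measure_ball_lt_top.ne).ne'
    (ENNReal.rpow_ne_top_of_nonneg (by positivity) measure_ball_lt_top.ne)
  have hV := volume_closedBall_rpow_one_add_natCast_div hn x₀ hr.le (d + 1)
  push_cast at hV
  calc ‖∫ y in closedBall x₀ r, K (x - y) * (a y : ℂ)‖ₑ
      ≤ ENNReal.ofReal (M * r ^ (d + 1) * ‖x - x₀‖ ^ (-((n : ℝ) + d + 1))) * (V * N⁻¹) :=
        ha.enorm_setIntegral_kernel_mul_le hs hN hd hK hKbound hx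
    _ ≤ (ENNReal.ofReal M + 1) * ENNReal.ofReal (r ^ (d + 1)) * O * (V * N⁻¹) := by
        rw [ENNReal.ofReal_mul' (by positivity), ENNReal.ofReal_mul' (by positivity)]
        gcongr
        exact le_self_add
    _ = (ENNReal.ofReal M + 1) * (κθ⁻¹ * κθ) * ENNReal.ofReal (r ^ (d + 1)) * O * (V * N⁻¹) := by
        rw [hκθ, mul_one]
    _ = kernelAtomConst n d C₀ * V ^ (1 + ((d : ℝ) + 1) / n) * N⁻¹ * O := by
        rw [kernelAtomConst, hV]
        ring

theorem statement14_general {n : ℕ} (p₀ : ℝ)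
    (d : ℕ) (hd : (d : ℤ) = ⌊(n : ℝ) * (1 / p₀ - 1)⌋)
    (s : ℝ) (hs : 1 < s) (C₀ : ℝ) (K : Euc n → ℂ)
    (hK : ContDiffOn ℝ (d + 1 : ℕ) K {(0 : Euc n)}ᶜ)
    (hKbound : ∀ k : ℕ, k ≤ d + 1 → ∀ x : Euc n, x ≠ 0 →
      ‖iteratedFDerivWithin ℝ k K {(0 : Euc n)}ᶜ x‖ ≤ C₀ * ‖x‖ ^ (-(n : ℝ) - k)) :
    ∃ C : ℝ≥0∞, C < ∞ ∧
    ∀ (p : Euc n → ℝ), IsMP0 p p₀ →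
    ∀ (a : Euc n → ℝ) (x₀ : Euc n) (r : ℝ), IsAtomQ p p₀ s a x₀ r →
    ∀ x : Euc n, 2 * r ≤ ‖x - x₀‖ →
      (‖∫ y in closedBall x₀ r, K (x - y) * (a y : ℂ)‖₊ : ℝ≥0∞) ≤
        C * volume (closedBall x₀ r) ^ (1 + ((d : ℝ) + 1) / n) * (ballNorm p x₀ r)⁻¹ *
          ENNReal.ofReal (‖x - x₀‖ ^ (-((n : ℝ) + d + 1))) :=
  ⟨kernelAtomConst n d C₀, kernelAtomConst_lt_top n d C₀, fun _ _ _ _ _ ha _ hx =>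
    ha.enorm_setIntegral_kernel_mul_le_decay hs.le hd hK hKbound hx⟩

/-- pointwise decay of a singular integral applied to a `(p(·),s)` atom. -/
theorem statement14 {n : ℕ} (hn : 1 ≤ n) (p₀ : ℝ) (hp₀pos : 0 < p₀) (hp₀ : p₀ ≤ 1)
    (d : ℕ) (hd : (d : ℤ) = ⌊(n : ℝ) * (1 / p₀ - 1)⌋)
    (s : ℝ) (hs : 1 < s) (C₀ : ℝ) (K : Euc n → ℂ)
    (hK : ContDiffOn ℝ (d + 1 : ℕ) K {(0 : Euc n)}ᶜ)
    (hKbound : ∀ k : ℕ, k ≤ d + 1 → ∀ x : Euc n, x ≠ 0 →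
      ‖iteratedFDerivWithin ℝ k K {(0 : Euc n)}ᶜ x‖ ≤ C₀ * ‖x‖ ^ (-(n : ℝ) - k)) :
    ∃ C : ℝ≥0∞, C < ∞ ∧
    ∀ (p : Euc n → ℝ), IsMP0 p p₀ →
    ∀ (a : Euc n → ℝ) (x₀ : Euc n) (r : ℝ), IsAtomQ p p₀ s a x₀ r →
    ∀ x : Euc n, 2 * r ≤ ‖x - x₀‖ →
      (‖∫ y in closedBall x₀ r, K (x - y) * (a y : ℂ)‖₊ : ℝ≥0∞) ≤
        C * volume (closedBall x₀ r) ^ (1 + ((d : ℝ) + 1) / n) * (ballNorm p x₀ r)⁻¹ *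
          ENNReal.ofReal (‖x - x₀‖ ^ (-((n : ℝ) + d + 1))) :=
  statement14_general p₀ d hd s hs C₀ K hK hKbound

end VarHardy
end
end

section
/- Let p(·): ℝⁿ → (0,∞) be measurable with 0 < p₋ := ess inf p ≤ p₊ := ess sup p < ∞ and p₋ ≤ 1. Then for all measurable functions f, g on ℝⁿ: ‖f + g‖_{p(·)}^{p₋} ≤ ‖f‖_{p(·)}^{p₋} + ‖g‖_{p(·)}^{p₋}. -/
/-!
Write `m = p₋`. If `u` and `v` are admissible for `f` and `g` in the Luxemburg infimum, put
`λ = (u ^ m + v ^ m) ^ (1 / m)`. Then `|f + g| / λ ≤ (u / λ) (|f| / u) + (v / λ) (|g| / v)` with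
`(u / λ) ^ m + (v / λ) ^ m = 1`. Raising to the power `p(x) ≥ m`, the `m`-triangle inequality
`(a + b) ^ m ≤ a ^ m + b ^ m` (as `m ≤ 1`) followed by Jensen's inequality for the exponent
`p(x) / m ≥ 1` bounds the modular of `(f + g) / λ` by a convex combination of those of `f / u`
and `g / v`, hence by `1`. So `‖f + g‖ ^ m ≤ u ^ m + v ^ m`, and `u`, `v` may decrease to the norms.
-/

open MeasureTheory Metric Filter Topology ENNReal SchwartzMap
open scoped NNReal

noncomputable section

namespace ENNReal

lemma mul_add_mul_rpow_le {m q : ℝ} (hm : 0 < m) (hm1 : m ≤ 1) (hmq : m ≤ q)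
    {σ τ : ℝ≥0∞} (hστ : σ ^ m + τ ^ m = 1) (a b : ℝ≥0∞) :
    (σ * a + τ * b) ^ q ≤ σ ^ m * a ^ q + τ ^ m * b ^ q := by
  have hq : q = m * (q / m) := by field_simp
  have hsub : (σ * a + τ * b) ^ m ≤ σ ^ m * a ^ m + τ ^ m * b ^ m := by
    rw [← mul_rpow_of_nonneg _ _ hm.le, ← mul_rpow_of_nonneg _ _ hm.le]
    exact rpow_add_le_add_rpow _ _ hm.le hm1
  calc (σ * a + τ * b) ^ q = ((σ * a + τ * b) ^ m) ^ (q / m) := by rw [← rpow_mul, ← hq]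
    _ ≤ (σ ^ m * a ^ m + τ ^ m * b ^ m) ^ (q / m) :=
        rpow_le_rpow hsub (div_nonneg (hm.le.trans hmq) hm.le)
    _ ≤ σ ^ m * (a ^ m) ^ (q / m) + τ ^ m * (b ^ m) ^ (q / m) :=
        rpow_arith_mean_le_arith_mean2_rpow _ _ _ _ hστ ((one_le_div hm).2 hmq)
    _ = σ ^ m * a ^ q + τ ^ m * b ^ q := by rw [← rpow_mul, ← rpow_mul, ← hq]

lemma le_add_of_forall_lt {a b c : ℝ≥0∞} (h : ∀ a' > a, ∀ b' > b, c ≤ a' + b') :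
    c ≤ a + b := by
  refine le_of_forall_pos_le_add fun ε hε hab => ?_
  obtain ⟨ha, hb⟩ := add_lt_top.1 hab
  have hε2 : (ε : ℝ≥0∞) / 2 ≠ 0 := by simpa using hε.ne'
  calc c ≤ (a + ε / 2) + (b + ε / 2) := h _ (lt_add_right ha.ne hε2) _ (lt_add_right hb.ne hε2)
    _ = a + b + ε := by rw [add_add_add_comm, ENNReal.add_halves]

lemma le_rpow_add_rpow_of_forall_lt {m : ℝ} (hm : 0 < m) {a b c : ℝ≥0∞}
    (h : ∀ u > a, ∀ v > b, c ≤ u ^ m + v ^ m) : c ≤ a ^ m + b ^ m := by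
  refine le_add_of_forall_lt fun a' ha' b' hb' => ?_
  have lt_rpow_inv : ∀ x y : ℝ≥0∞, x ^ m < y → x < y ^ m⁻¹ := fun x y hxy => by
    rwa [← rpow_lt_rpow_iff hm, rpow_inv_rpow hm.ne']
  simpa only [rpow_inv_rpow hm.ne'] using h _ (lt_rpow_inv a a' ha') _ (lt_rpow_inv b b' hb')

end ENNReal

section Modular

variable {α : Type*} [MeasurableSpace α] {μ : Measure α} {p : α → ℝ}

lemma lintegral_div_rpow_le_one_of_le (hp : ∀ᵐ x ∂μ, 0 ≤ p x) (F : α → ℝ≥0∞) {u v : ℝ≥0∞}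
    (huv : u ≤ v) (hu : ∫⁻ x, (F x / u) ^ p x ∂μ ≤ 1) : ∫⁻ x, (F x / v) ^ p x ∂μ ≤ 1 := by
  refine le_trans (lintegral_mono_ae ?_) hu
  filter_upwards [hp] with x hx
  exact ENNReal.rpow_le_rpow (ENNReal.div_le_div_left huv _) hx

lemma lintegral_div_rpow_add_le_one {m : ℝ} (hm : 0 < m) (hm1 : m ≤ 1) (hp : Measurable p)
    (hmp : ∀ᵐ x ∂μ, m ≤ p x) {F G H : α → ℝ≥0∞} (hF : Measurable F) (hG : Measurable G)
    (hH : ∀ x, H x ≤ F x + G x) {u v : ℝ≥0∞} (hu0 : u ≠ 0) (hu : u ≠ ∞) (hv0 : v ≠ 0)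
    (hv : v ≠ ∞) (hFu : ∫⁻ x, (F x / u) ^ p x ∂μ ≤ 1) (hGv : ∫⁻ x, (G x / v) ^ p x ∂μ ≤ 1) :
    ∫⁻ x, (H x / (u ^ m + v ^ m) ^ m⁻¹) ^ p x ∂μ ≤ 1 := by
  set l := (u ^ m + v ^ m) ^ m⁻¹
  have hl : l ^ m = u ^ m + v ^ m := ENNReal.rpow_inv_rpow hm.ne' _
  have hl0 : l ^ m ≠ 0 := by simp [hl, ENNReal.rpow_eq_zero_iff, hu0, hm.not_gt]
  have hl_top : l ^ m ≠ ∞ := by simp [hl, ENNReal.rpow_eq_top_iff, hu, hv, hm.not_gt]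
  have hweights : (u / l) ^ m + (v / l) ^ m = 1 := by
    rw [ENNReal.div_rpow_of_nonneg _ _ hm.le, ENNReal.div_rpow_of_nonneg _ _ hm.le,
      ENNReal.div_add_div_same, ← hl, ENNReal.div_self hl0 hl_top]
  have hrescale : ∀ {w : ℝ≥0∞} (a : ℝ≥0∞), w ≠ 0 → w ≠ ∞ → w / l * (a / w) = a / l :=
    fun a hw0 hw => by rw [← ENNReal.mul_div_right_comm, ENNReal.mul_div_cancel hw0 hw]
  have hpointwise : ∀ᵐ x ∂μ, (H x / l) ^ p x ≤
      (u / l) ^ m * (F x / u) ^ p x + (v / l) ^ m * (G x / v) ^ p x := by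
    filter_upwards [hmp] with x hx
    have hbase : H x / l ≤ u / l * (F x / u) + v / l * (G x / v) := by
      rw [hrescale _ hu0 hu, hrescale _ hv0 hv, ENNReal.div_add_div_same]
      exact ENNReal.div_le_div_right (hH x) _
    exact (ENNReal.rpow_le_rpow hbase (hm.le.trans hx)).trans
      (ENNReal.mul_add_mul_rpow_le hm hm1 hx hweights _ _)
  calc ∫⁻ x, (H x / l) ^ p x ∂μ
      ≤ ∫⁻ x, ((u / l) ^ m * (F x / u) ^ p x + (v / l) ^ m * (G x / v) ^ p x) ∂μ :=
        lintegral_mono_ae hpointwise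
    _ = (u / l) ^ m * ∫⁻ x, (F x / u) ^ p x ∂μ + (v / l) ^ m * ∫⁻ x, (G x / v) ^ p x ∂μ := by
        rw [lintegral_add_left (((hF.div_const _).pow hp).const_mul _),
          lintegral_const_mul _ ((hF.div_const _).pow hp),
          lintegral_const_mul _ ((hG.div_const _).pow hp)]
    _ ≤ (u / l) ^ m * 1 + (v / l) ^ m * 1 := by gcongr
    _ = 1 := by rw [mul_one, mul_one, hweights]

end Modular

namespace VarHardy

section TriangleInequality

variable {n : ℕ} {p : Euc n → ℝ} {m : ℝ} {F G H : Euc n → ℝ≥0∞}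

lemma luxNorm_rpow_le_of_lt (hm : 0 < m) (hm1 : m ≤ 1) (hp : Measurable p)
    (hmp : ∀ᵐ x ∂(volume : Measure (Euc n)), m ≤ p x) (hF : Measurable F) (hG : Measurable G)
    (hH : ∀ x, H x ≤ F x + G x) {u v : ℝ≥0∞} (hu : luxNorm p F < u) (hv : luxNorm p G < v) :
    luxNorm p H ^ m ≤ u ^ m + v ^ m := by
  rcases eq_or_ne u ∞ with rfl | hu_top
  · simp [ENNReal.top_rpow_of_pos hm]
  rcases eq_or_ne v ∞ with rfl | hv_top
  · simp [ENNReal.top_rpow_of_pos hm]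
  have hp0 : ∀ᵐ x ∂(volume : Measure (Euc n)), 0 ≤ p x := by
    filter_upwards [hmp] with x hx using hm.le.trans hx
  obtain ⟨u', hu'_adm, hu'u⟩ := sInf_lt_iff.mp hu
  obtain ⟨v', hv'_adm, hv'v⟩ := sInf_lt_iff.mp hv
  have hadm : ∫⁻ x, (H x / (u ^ m + v ^ m) ^ m⁻¹) ^ p x ≤ 1 :=
    lintegral_div_rpow_add_le_one hm hm1 hp hmp hF hG hH (pos_of_gt hu).ne' hu_top
      (pos_of_gt hv).ne' hv_top (lintegral_div_rpow_le_one_of_le hp0 F hu'u.le hu'_adm)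
      (lintegral_div_rpow_le_one_of_le hp0 G hv'v.le hv'_adm)
  calc luxNorm p H ^ m ≤ ((u ^ m + v ^ m) ^ m⁻¹) ^ m :=
        ENNReal.rpow_le_rpow (sInf_le hadm) hm.le
    _ = u ^ m + v ^ m := ENNReal.rpow_inv_rpow hm.ne' _

lemma luxNorm_rpow_le_add (hm : 0 < m) (hm1 : m ≤ 1) (hp : Measurable p)
    (hmp : ∀ᵐ x ∂(volume : Measure (Euc n)), m ≤ p x) (hF : Measurable F) (hG : Measurable G)
    (hH : ∀ x, H x ≤ F x + G x) : luxNorm p H ^ m ≤ luxNorm p F ^ m + luxNorm p G ^ m :=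
  ENNReal.le_rpow_add_rpow_of_forall_lt hm fun _ hu _ hv =>
    luxNorm_rpow_le_of_lt hm hm1 hp hmp hF hG hH hu hv

end TriangleInequality

theorem statement18_general {n : ℕ} (p : Euc n → ℝ) (hpm : Measurable p)
    (hppos : ∀ᵐ x ∂(volume : Measure (Euc n)), 0 < p x)
    (hpos : 0 < essInf p (volume : Measure (Euc n)))
    (hle1 : essInf p (volume : Measure (Euc n)) ≤ 1)
    (f g : Euc n → ℝ) (hf : Measurable f) (hg : Measurable g) :
    luxNorm' p (fun x => f x + g x) ^ essInf p (volume : Measure (Euc n)) ≤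
      luxNorm' p f ^ essInf p (volume : Measure (Euc n)) +
        luxNorm' p g ^ essInf p (volume : Measure (Euc n)) := by
  have hp_bdd_below : IsBoundedUnder (· ≥ ·) (ae (volume : Measure (Euc n))) p :=
    ⟨0, eventually_map.2 (hppos.mono fun _ hx => hx.le)⟩
  refine luxNorm_rpow_le_add hpos hle1 hpm (ae_essInf_le hp_bdd_below) hf.nnnorm.coe_nnreal_ennreal
    hg.nnnorm.coe_nnreal_ennreal fun x => ?_
  exact_mod_cast nnnorm_add_le (f x) (g x)

/-- the `p₋`-triangle inequality for the Luxemburg quasi-norm when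
`p₋ ≤ 1`. -/
theorem statement18 {n : ℕ} (hn : 1 ≤ n) (p : Euc n → ℝ) (hpm : Measurable p)
    (hppos : ∀ᵐ x ∂(volume : Measure (Euc n)), 0 < p x)
    (hbdd : ∃ M : ℝ, ∀ᵐ x ∂(volume : Measure (Euc n)), p x ≤ M)
    (hpos : 0 < essInf p (volume : Measure (Euc n)))
    (hle1 : essInf p (volume : Measure (Euc n)) ≤ 1)
    (f g : Euc n → ℝ) (hf : Measurable f) (hg : Measurable g) :
    luxNorm' p (fun x => f x + g x) ^ essInf p (volume : Measure (Euc n)) ≤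
      luxNorm' p f ^ essInf p (volume : Measure (Euc n)) +
        luxNorm' p g ^ essInf p (volume : Measure (Euc n)) :=
  statement18_general p hpm hppos hpos hle1 f g hf hg

end VarHardy
end
end
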